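/- Let $n \ge 2$, $1 \le k \le n-1$, $\rho = (k-1)/2$, $\sigma = (n-k)/2 - 1$, and let $\{Y_{j,\lambda}\}_{\lambda=1}^{d_n(j)}$ be an orthonormal basis (with respect to the normalized measure $d_*x$) of the spherical harmonics of even degree $j$ on $S^n$. Define $\hat Y_{j,\lambda}(v) = \alpha_j \int_{S^n} Y_{j,\lambda}(x)\,R_{j/2}^{(\rho,\sigma)}(2|x^Tv|^2-1)\,d_*x$ for $v \in V_{n+1,n-k}$, where $\alpha_j = \varkappa_j\sqrt{d_n(j)}$ with $\varkappa_j$ as in the paper. Then the addition formula $R_{j/2}^{(\rho,\sigma)}(2|x^Tv|^2-1) = \alpha_j^{-1}\sum_{\lambda=1}^{d_n(j)} Y_{j,\lambda}(x)\,\hat Y_{j,\lambda}(v)$ holds for all $x \in S^n$ and $v \in V_{n+1,n-k}$. -/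

import Mathlib

open Real MeasureTheory Matrix

/-- The Jacobi polynomial `P_m^{(ρ,σ)}`, given by its explicit hypergeometric series. -/
noncomputable def jacobiP (ρ σ : ℝ) (m : ℕ) (t : ℝ) : ℝ :=
  (Real.Gamma (ρ + m + 1) / (m.factorial * Real.Gamma (ρ + σ + m + 1))) *
    ∑ s ∈ Finset.range (m + 1),
      (m.choose s : ℝ) * Real.Gamma (ρ + σ + m + s + 1) / Real.Gamma (ρ + s + 1) *
        ((t - 1) / 2) ^ s

/-- The normalized Jacobi polynomial `R_m^{(ρ,σ)}(t) = P_m^{(ρ,σ)}(t)/P_m^{(ρ,σ)}(1)`. -/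
noncomputable def jacobiR (ρ σ : ℝ) (m : ℕ) (t : ℝ) : ℝ :=
  jacobiP ρ σ m t / jacobiP ρ σ m 1

/-- The surface area `σ_m = 2π^{(m+1)/2}/Γ((m+1)/2)` of the unit sphere `S^m ⊂ ℝ^{m+1}`. -/
noncomputable def sigmaS (m : ℕ) : ℝ :=
  2 * Real.pi ^ (((m : ℝ) + 1) / 2) / Real.Gamma (((m : ℝ) + 1) / 2)

/-- `d_n(j)`, the dimension of the space of spherical harmonics of degree `j` on `S^n`:
`d_n(j) = (n+2j-1)(n+j-2)!/(j!(n-1)!)`. -/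
def dN (n j : ℕ) : ℕ :=
  (n + 2 * j - 1) * (n + j - 2).factorial / (j.factorial * (n - 1).factorial)

/-- The constant `ϰ_j²` from the paper. -/
noncomputable def kappaSq (n k j : ℕ) : ℝ :=
  sigmaS n * (2 * (j : ℝ) + (n : ℝ) - 1) * Real.Gamma (((j : ℝ) + (k : ℝ) + 1) / 2) *
      Real.Gamma (((j : ℝ) + (n : ℝ) - 1) / 2) /
    (sigmaS (n - k - 1) * sigmaS k * Real.Gamma (((k : ℝ) + 1) / 2) ^ 2 *
      Real.Gamma ((j : ℝ) / 2 + 1) * Real.Gamma (((j : ℝ) + (n : ℝ) - (k : ℝ)) / 2))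

/-- `α_j = ϰ_j √(d_n(j))`. -/
noncomputable def alphaJ (n k j : ℕ) : ℝ :=
  Real.sqrt (kappaSq n k j) * Real.sqrt (dN n j)

/-- `|x^T v|`, the length of the orthogonal projection of `x` onto the span of the
columns of `v`. -/
noncomputable def stiefelProj (n k : ℕ) (x : EuclideanSpace ℝ (Fin (n + 1)))
    (v : Matrix (Fin (n + 1)) (Fin (n - k)) ℝ) : ℝ :=
  Real.sqrt (∑ c : Fin (n - k), (∑ i : Fin (n + 1), x i * v i c) ^ 2)

/-- `Y` is a spherical harmonic of degree `j` on `S^n`. -/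
def IsSphericalHarmonic (n j : ℕ) (Y : EuclideanSpace ℝ (Fin (n + 1)) → ℝ) : Prop :=
  ∃ P : MvPolynomial (Fin (n + 1)) ℝ, P.IsHomogeneous j ∧
    (∑ i : Fin (n + 1), MvPolynomial.pderiv i (MvPolynomial.pderiv i P)) = 0 ∧
    ∀ x ∈ Metric.sphere (0 : EuclideanSpace ℝ (Fin (n + 1))) 1,
      Y x = MvPolynomial.eval (fun i => x i) P

/-!
The zonal function `z ↦ R_{j/2}^{(ρ,σ)}(2|zᵀv|² - 1)` is itself a spherical harmonic of degree
`j = 2m`. Homogenizing its Jacobi series in `(t - 1)/2 = |zᵀv|² - 1` gives the polynomial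
`∑ β_s Q^s W^(m-s)` in the quadrics `Q = |xᵀv|² - |x|²` and `W = |x|²`. Since `vᵀv = 1`, these
close up under the gradient pairing (`∇Q·∇Q = -4Q`, `∇Q·∇W = 4Q`, `∇W·∇W = 4W`) and have constant
Laplacians, so the Laplacian of the sum telescopes, and it vanishes exactly because the Jacobi
coefficients satisfy `β_{s+1} (s+1) (ρ+s+1) = β_s (m-s) (ρ+σ+m+s+1)`. Expanding the zonal
harmonic in the orthonormal basis, its coefficients are the integrals `α_j⁻¹ Ŷ_{j,λ}(v)`.
-/

namespace MvPolynomial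

variable {ι κ R : Type*} [Fintype ι] [CommRing R]

section Laplacian

noncomputable def laplacian : MvPolynomial ι R →ₗ[R] MvPolynomial ι R :=
  ∑ i, (pderiv i).toLinearMap ∘ₗ (pderiv i).toLinearMap

noncomputable def gradDot (p q : MvPolynomial ι R) : MvPolynomial ι R :=
  ∑ i, pderiv i p * pderiv i q

theorem laplacian_apply (p : MvPolynomial ι R) :
    laplacian p = ∑ i, pderiv i (pderiv i p) := by
  simp [laplacian]

theorem laplacian_C_mul (a : R) (p : MvPolynomial ι R) :
    laplacian (C a * p) = C a * laplacian p := by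
  rw [C_mul', C_mul', map_smul]

theorem gradDot_comm (p q : MvPolynomial ι R) : gradDot p q = gradDot q p := by
  simp only [gradDot, mul_comm]

theorem gradDot_sub_left (p q r : MvPolynomial ι R) :
    gradDot (p - q) r = gradDot p r - gradDot q r := by
  simp only [gradDot, map_sub, sub_mul, Finset.sum_sub_distrib]

theorem gradDot_sub_right (p q r : MvPolynomial ι R) :
    gradDot p (q - r) = gradDot p q - gradDot p r := by
  simp only [gradDot, map_sub, mul_sub, Finset.sum_sub_distrib]

theorem laplacian_mul (p q : MvPolynomial ι R) :
    laplacian (p * q) = laplacian p * q + p * laplacian q + 2 * gradDot p q := by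
  simp only [laplacian_apply, gradDot, pderiv_mul, map_add, Finset.mul_sum, Finset.sum_mul,
    ← Finset.sum_add_distrib]
  exact Finset.sum_congr rfl fun i _ => by ring

theorem gradDot_pow_pow (p q : MvPolynomial ι R) (s t : ℕ) :
    gradDot (p ^ s) (q ^ t) = s * t * (p ^ (s - 1) * q ^ (t - 1)) * gradDot p q := by
  simp only [gradDot, pderiv_pow, Finset.mul_sum]
  exact Finset.sum_congr rfl fun i _ => by ring

variable {p q : MvPolynomial ι R} {g l : R}

theorem laplacian_pow (hg : gradDot p p = C g * p) (hl : laplacian p = C l) (s : ℕ) :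
    laplacian (p ^ s) = C (s * ((s - 1) * g + l)) * p ^ (s - 1) := by
  induction s with
  | zero => simp [laplacian_apply]
  | succ s ih =>
    have hgs := gradDot_pow_pow p p s 1
    simp only [pow_one, Nat.sub_self, pow_zero, Nat.cast_one, mul_one, hg] at hgs
    rw [pow_succ, laplacian_mul, ih, hl, hgs]
    rcases s with _ | s
    · simp
    · simp only [Nat.add_sub_cancel, map_mul, map_add, map_sub, map_natCast, map_one]
      push_cast
      ring

theorem laplacian_pow_mul_pow {gp gq gpq lp lq : R} (hpp : gradDot p p = C gp * p)
    (hqq : gradDot q q = C gq * q) (hpq : gradDot p q = C gpq * p)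
    (hlp : laplacian p = C lp) (hlq : laplacian q = C lq) (s t : ℕ) :
    laplacian (p ^ s * q ^ t) =
      C (s * ((s - 1) * gp + lp)) * (p ^ (s - 1) * q ^ t) +
        C (t * ((t - 1) * gq + lq + 2 * s * gpq)) * (p ^ s * q ^ (t - 1)) := by
  rw [laplacian_mul, laplacian_pow hpp hlp, laplacian_pow hqq hlq, gradDot_pow_pow, hpq]
  rcases s with _ | s
  · simp
  rcases t with _ | t
  · simp
  simp only [Nat.add_sub_cancel, map_mul, map_add, map_sub, map_natCast, map_one, map_ofNat]
  push_cast
  ring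

theorem laplacian_sum_pow_mul_pow_eq_zero {gp gq gpq lp lq : R} (hpp : gradDot p p = C gp * p)
    (hqq : gradDot q q = C gq * q) (hpq : gradDot p q = C gpq * p)
    (hlp : laplacian p = C lp) (hlq : laplacian q = C lq) (m : ℕ) (β : ℕ → R)
    (hβ : ∀ s < m, β (s + 1) * ((s + 1) * (s * gp + lp)) +
        β s * ((m - s) * ((m - s - 1) * gq + lq + 2 * s * gpq)) = 0) :
    laplacian (∑ s ∈ Finset.range (m + 1), C (β s) * (p ^ s * q ^ (m - s))) = 0 := by
  set F : ℕ → MvPolynomial ι R := fun s =>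
    C (β s * (s * ((s - 1) * gp + lp))) * (p ^ (s - 1) * q ^ (m - s))
  set G : ℕ → MvPolynomial ι R := fun s =>
    C (β s * ((m - s : ℕ) * (((m - s : ℕ) - 1) * gq + lq + 2 * s * gpq))) *
      (p ^ s * q ^ (m - s - 1))
  have hterm (s : ℕ) : laplacian (C (β s) * (p ^ s * q ^ (m - s))) = F s + G s := by
    rw [laplacian_C_mul, laplacian_pow_mul_pow hpp hqq hpq hlp hlq]
    simp only [F, G, map_mul]
    ring
  have hpair : ∀ s < m, F (s + 1) + G s = 0 := by
    intro s hs
    simp only [F, G, Nat.add_sub_cancel, show m - (s + 1) = m - s - 1 by omega, ← add_mul,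
      ← map_add]
    push_cast [Nat.cast_sub hs.le]
    rw [add_sub_cancel_right, hβ s hs, map_zero, zero_mul]
  have hF0 : F 0 = 0 := by simp [F]
  have hGm : G m = 0 := by simp [G]
  rw [map_sum, Finset.sum_congr rfl fun s _ => hterm s, Finset.sum_add_distrib,
    Finset.sum_range_succ' F, Finset.sum_range_succ G, hF0, hGm, add_zero, add_zero,
    ← Finset.sum_add_distrib]
  exact Finset.sum_eq_zero fun s hs => hpair s (Finset.mem_range.mp hs)

end Laplacian

section Quadrics

variable (ι R) in
noncomputable def normSq : MvPolynomial ι R := ∑ i, X i ^ 2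

noncomputable def projNormSq [Fintype κ] (v : Matrix ι κ R) : MvPolynomial ι R :=
  ∑ c, (∑ i, X i * C (v i c)) ^ 2

theorem isHomogeneous_normSq : (normSq ι R).IsHomogeneous 2 :=
  IsHomogeneous.sum _ _ _ fun i _ => isHomogeneous_X_pow i 2

theorem isHomogeneous_projNormSq [Fintype κ] (v : Matrix ι κ R) :
    (projNormSq v).IsHomogeneous 2 :=
  IsHomogeneous.sum _ _ _ fun c _ => by
    simpa using (IsHomogeneous.sum _ _ _ fun i _ =>
      (isHomogeneous_X R i).mul (isHomogeneous_C ι (v i c))).pow 2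

theorem eval_normSq (x : ι → R) : eval x (normSq ι R) = ∑ i, x i ^ 2 := by
  simp [normSq]

theorem eval_projNormSq [Fintype κ] (v : Matrix ι κ R) (x : ι → R) :
    eval x (projNormSq v) = ∑ c, (∑ i, x i * v i c) ^ 2 := by
  simp [projNormSq]

theorem pderiv_normSq (i : ι) : pderiv i (normSq ι R) = 2 * X i := by
  classical
  simp [normSq, pderiv_X, Pi.single_apply]

theorem pderiv_sum_X_mul_C (i : ι) (w : ι → R) : pderiv i (∑ j, X j * C (w j)) = C (w i) := by
  classical
  simp [pderiv_X, Pi.single_apply]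

theorem pderiv_projNormSq [Fintype κ] (v : Matrix ι κ R) (i : ι) :
    pderiv i (projNormSq v) = 2 * ∑ c, C (v i c) * ∑ j, X j * C (v j c) := by
  rw [projNormSq, map_sum, Finset.mul_sum]
  refine Finset.sum_congr rfl fun c _ => ?_
  rw [pderiv_pow, pderiv_sum_X_mul_C]
  push_cast
  ring

theorem gradDot_normSq_normSq : gradDot (normSq ι R) (normSq ι R) = C 4 * normSq ι R := by
  simp only [gradDot, pderiv_normSq]
  rw [normSq, Finset.mul_sum, map_ofNat]
  exact Finset.sum_congr rfl fun i _ => by ring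

theorem laplacian_normSq : laplacian (normSq ι R) = C (2 * Fintype.card ι : R) := by
  have h (i : ι) : pderiv i (2 * X i : MvPolynomial ι R) = 2 := by
    rw [two_mul, map_add, pderiv_X_self, one_add_one_eq_two]
  simp only [laplacian_apply, pderiv_normSq, h, Finset.sum_const, Finset.card_univ, nsmul_eq_mul]
  rw [map_mul, map_ofNat, map_natCast, mul_comm]

theorem gradDot_projNormSq_normSq [Fintype κ] (v : Matrix ι κ R) :
    gradDot (projNormSq v) (normSq ι R) = C 4 * projNormSq v := by
  simp only [gradDot, pderiv_projNormSq, pderiv_normSq, Finset.sum_mul, Finset.mul_sum]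
  rw [Finset.sum_comm, projNormSq, Finset.mul_sum]
  refine Finset.sum_congr rfl fun c _ => ?_
  rw [map_ofNat, sq, Finset.sum_mul_sum, Finset.mul_sum]
  refine Finset.sum_congr rfl fun i _ => ?_
  rw [Finset.mul_sum]
  exact Finset.sum_congr rfl fun j _ => by ring

theorem gradDot_projNormSq_sub_normSq_normSq [Fintype κ] (v : Matrix ι κ R) :
    gradDot (projNormSq v - normSq ι R) (normSq ι R) = C 4 * (projNormSq v - normSq ι R) := by
  rw [gradDot_sub_left, gradDot_projNormSq_normSq, gradDot_normSq_normSq, mul_sub]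

theorem sum_mul_of_transpose_mul_self_eq_one [DecidableEq κ] {v : Matrix ι κ R}
    (hv : vᵀ * v = 1) (c c' : κ) : ∑ i, v i c * v i c' = if c = c' then 1 else 0 := by
  simpa [Matrix.mul_apply, Matrix.one_apply] using congrFun₂ hv c c'

variable [Fintype κ] [DecidableEq κ] {v : Matrix ι κ R}

theorem gradDot_projNormSq_projNormSq (hv : vᵀ * v = 1) :
    gradDot (projNormSq v) (projNormSq v) = C 4 * projNormSq v := by
  have hterm (i : ι) (L : κ → MvPolynomial ι R) :
      (2 * ∑ c, C (v i c) * L c) * (2 * ∑ c, C (v i c) * L c) =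
        ∑ c, ∑ c', C (v i c * v i c') * (4 * (L c * L c')) := by
    rw [mul_mul_mul_comm, Finset.sum_mul_sum, Finset.mul_sum]
    refine Finset.sum_congr rfl fun c _ => ?_
    rw [Finset.mul_sum]
    exact Finset.sum_congr rfl fun c' _ => by rw [map_mul]; ring
  simp only [gradDot, pderiv_projNormSq, hterm]
  rw [Finset.sum_comm, projNormSq, Finset.mul_sum]
  refine Finset.sum_congr rfl fun c _ => ?_
  rw [Finset.sum_comm]
  simp only [← Finset.sum_mul, ← map_sum, sum_mul_of_transpose_mul_self_eq_one hv, apply_ite C,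
    map_one, map_zero, ite_mul, one_mul, zero_mul, Finset.sum_ite_eq, Finset.mem_univ, if_true,
    map_ofNat]
  ring

theorem laplacian_projNormSq (hv : vᵀ * v = 1) :
    laplacian (projNormSq v) = C (2 * Fintype.card κ : R) := by
  have h (i : ι) : pderiv i (2 * ∑ c, C (v i c) * ∑ j, X j * C (v j c)) =
      ∑ c, C (2 * (v i c * v i c)) := by
    rw [← map_ofNat C 2, pderiv_C_mul, map_sum, Finset.mul_sum]
    refine Finset.sum_congr rfl fun c _ => ?_
    rw [pderiv_C_mul, pderiv_sum_X_mul_C, ← map_mul, ← map_mul, mul_left_comm]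
  simp only [laplacian_apply, pderiv_projNormSq, h]
  rw [Finset.sum_comm]
  simp only [← map_sum, ← Finset.mul_sum, sum_mul_of_transpose_mul_self_eq_one hv, if_pos,
    Finset.sum_const, Finset.card_univ, nsmul_eq_mul]
  rw [mul_one]

theorem gradDot_projNormSq_sub_normSq_self (hv : vᵀ * v = 1) :
    gradDot (projNormSq v - normSq ι R) (projNormSq v - normSq ι R) =
      C (-4) * (projNormSq v - normSq ι R) := by
  rw [gradDot_sub_left, gradDot_sub_right, gradDot_sub_right, gradDot_projNormSq_projNormSq hv,
    gradDot_comm (normSq ι R), gradDot_projNormSq_normSq, gradDot_normSq_normSq, map_neg]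
  ring

theorem laplacian_projNormSq_sub_normSq (hv : vᵀ * v = 1) :
    laplacian (projNormSq v - normSq ι R) =
      C (2 * Fintype.card κ - 2 * Fintype.card ι : R) := by
  rw [map_sub, laplacian_projNormSq hv, laplacian_normSq, map_sub]

end Quadrics

end MvPolynomial

open MvPolynomial

noncomputable def jacobiCoeff (ρ σ : ℝ) (m s : ℕ) : ℝ :=
  m.choose s * Gamma (ρ + σ + m + s + 1) / Gamma (ρ + s + 1)

theorem jacobiR_eq_sum (ρ σ : ℝ) (m : ℕ) (t : ℝ) :
    jacobiR ρ σ m t =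
      Gamma (ρ + m + 1) / (m.factorial * Gamma (ρ + σ + m + 1)) / jacobiP ρ σ m 1 *
        ∑ s ∈ Finset.range (m + 1), jacobiCoeff ρ σ m s * ((t - 1) / 2) ^ s :=
  mul_div_right_comm _ _ _

theorem jacobiCoeff_succ_mul {ρ σ : ℝ} (hρ : -1 < ρ) (hσ : -1 < σ) {m s : ℕ} (hs : s < m) :
    jacobiCoeff ρ σ m (s + 1) * ((s + 1) * (ρ + s + 1)) =
      jacobiCoeff ρ σ m s * ((m - s) * (ρ + σ + m + s + 1)) := by
  have hsm : (s : ℝ) + 1 ≤ m := by exact_mod_cast hs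
  have hA : 0 < ρ + σ + m + s + 1 := by linarith [(s.cast_nonneg : (0 : ℝ) ≤ s)]
  have hB : 0 < ρ + s + 1 := by linarith [(s.cast_nonneg : (0 : ℝ) ≤ s)]
  have hchoose : (m.choose (s + 1) : ℝ) * (s + 1) = m.choose s * (m - s) := by
    have h := congrArg (Nat.cast (R := ℝ)) (Nat.choose_succ_right_eq m s)
    push_cast [Nat.cast_sub hs.le] at h
    exact h
  simp only [jacobiCoeff]
  push_cast
  rw [show ρ + σ + m + (s + 1) + 1 = (ρ + σ + m + s + 1) + 1 by ring, Gamma_add_one hA.ne',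
    show ρ + (s + 1) + 1 = (ρ + s + 1) + 1 by ring, Gamma_add_one hB.ne']
  field_simp [(Gamma_pos_of_pos hB).ne']
  exact hchoose

section JacobiZonal

variable {ι κ : Type*} [Fintype ι] [Fintype κ]

/-- On the unit sphere, where `normSq = 1` and `projNormSq v - 1 = (t - 1) / 2` for
`t = 2 |xᵀv|² - 1`, this is the Jacobi series of `jacobiP`; the powers of `normSq` make it
homogeneous. -/
noncomputable def jacobiZonal (ρ σ : ℝ) (m : ℕ) (v : Matrix ι κ ℝ) : MvPolynomial ι ℝ :=
  ∑ s ∈ Finset.range (m + 1), C (jacobiCoeff ρ σ m s) *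
    ((projNormSq v - normSq ι ℝ) ^ s * normSq ι ℝ ^ (m - s))

theorem isHomogeneous_jacobiZonal (ρ σ : ℝ) (m : ℕ) (v : Matrix ι κ ℝ) :
    (jacobiZonal ρ σ m v).IsHomogeneous (2 * m) := by
  refine IsHomogeneous.sum _ _ _ fun s hs => IsHomogeneous.C_mul ?_ _
  have h := ((isHomogeneous_projNormSq v).sub isHomogeneous_normSq).pow s |>.mul
    (isHomogeneous_normSq.pow (m - s))
  have hsm := Finset.mem_range_succ_iff.mp hs
  rwa [show 2 * s + 2 * (m - s) = 2 * m by omega] at h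

theorem laplacian_jacobiZonal [DecidableEq κ] {v : Matrix ι κ ℝ} (hv : vᵀ * v = 1)
    {ρ σ : ℝ} (hρ : -1 < ρ) (hσ : -1 < σ) (hι : (Fintype.card ι : ℝ) = 2 * (ρ + σ + 2))
    (hκ : (Fintype.card κ : ℝ) = 2 * (σ + 1)) (m : ℕ) :
    laplacian (jacobiZonal ρ σ m v) = 0 := by
  refine laplacian_sum_pow_mul_pow_eq_zero (gradDot_projNormSq_sub_normSq_self hv)
    gradDot_normSq_normSq (gradDot_projNormSq_sub_normSq_normSq v)
    (laplacian_projNormSq_sub_normSq hv) laplacian_normSq m _ fun s hs => ?_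
  rw [hι, hκ]
  linear_combination (-4) * jacobiCoeff_succ_mul hρ hσ hs

theorem eval_jacobiZonal (ρ σ : ℝ) (m : ℕ) (v : Matrix ι κ ℝ) {x : ι → ℝ}
    (hx : ∑ i, x i ^ 2 = 1) :
    eval x (jacobiZonal ρ σ m v) =
      ∑ s ∈ Finset.range (m + 1),
        jacobiCoeff ρ σ m s * (∑ c, (∑ i, x i * v i c) ^ 2 - 1) ^ s := by
  simp [jacobiZonal, eval_projNormSq, eval_normSq, hx]

end JacobiZonal

theorem isSphericalHarmonic_jacobiR_stiefelProj {n k j : ℕ} (hkn : k < n) (hj : Even j)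
    {v : Matrix (Fin (n + 1)) (Fin (n - k)) ℝ} (hv : vᵀ * v = 1) :
    IsSphericalHarmonic n j fun z =>
      jacobiR (((k : ℝ) - 1) / 2) (((n : ℝ) - (k : ℝ)) / 2 - 1) (j / 2)
        (2 * stiefelProj n k z v ^ 2 - 1) := by
  obtain ⟨m, rfl⟩ := hj
  rw [← two_mul, Nat.mul_div_cancel_left m two_pos]
  set ρ : ℝ := ((k : ℝ) - 1) / 2 with hρ_def
  set σ : ℝ := ((n : ℝ) - (k : ℝ)) / 2 - 1 with hσ_def
  have hkn' : (k : ℝ) < n := by exact_mod_cast hkn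
  have hρ : -1 < ρ := by linarith [k.cast_nonneg (α := ℝ)]
  have hσ : -1 < σ := by linarith
  have hι : (Fintype.card (Fin (n + 1)) : ℝ) = 2 * (ρ + σ + 2) := by simp; ring
  have hκ : (Fintype.card (Fin (n - k)) : ℝ) = 2 * (σ + 1) := by
    simp [Nat.cast_sub hkn.le]; ring
  refine ⟨C (Gamma (ρ + m + 1) / (m.factorial * Gamma (ρ + σ + m + 1)) / jacobiP ρ σ m 1) *
    jacobiZonal ρ σ m v, (isHomogeneous_jacobiZonal ρ σ m v).C_mul _, ?_, fun z hz => ?_⟩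
  · rw [← laplacian_apply, laplacian_C_mul, laplacian_jacobiZonal hv hρ hσ hι hκ, mul_zero]
  · have hz1 : ∑ i, z i ^ 2 = 1 := by
      rw [← EuclideanSpace.real_norm_sq_eq, mem_sphere_zero_iff_norm.mp hz, one_pow]
    have hproj : stiefelProj n k z v ^ 2 = ∑ c, (∑ i, z i * v i c) ^ 2 :=
      Real.sq_sqrt (Finset.sum_nonneg fun c _ => sq_nonneg _)
    simp only [map_mul, eval_C, eval_jacobiZonal ρ σ m v hz1, jacobiR_eq_sum, hproj]
    congr 1
    exact Finset.sum_congr rfl fun s _ => by ring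

theorem integral_mul_eq_coeff_of_orthonormal {X ι : Type*} [MeasurableSpace X] {μ : Measure X}
    [Fintype ι] [DecidableEq ι] {Y : ι → X → ℝ} (hY : ∀ l, AEStronglyMeasurable (Y l) μ)
    {a : ℝ} (horth : ∀ l l', a * ∫ x, Y l x * Y l' x ∂μ = if l = l' then 1 else 0)
    {f : X → ℝ} {c : ι → ℝ} (hf : ∀ᵐ x ∂μ, f x = ∑ l, c l * Y l x) (l : ι) :
    a * ∫ x, Y l x * f x ∂μ = c l := by
  have hL2 (l : ι) : MemLp (Y l) 2 μ := by
    refine (memLp_two_iff_integrable_sq (hY l)).2 ?_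
    by_contra h
    simpa [← sq, integral_undef h] using horth l l
  calc a * ∫ x, Y l x * f x ∂μ = a * ∫ x, ∑ l', c l' * (Y l x * Y l' x) ∂μ := by
        refine congrArg _ (integral_congr_ae (hf.mono fun x hx => ?_))
        simp only [hx, Finset.mul_sum]
        exact Finset.sum_congr rfl fun l' _ => by ring
    _ = ∑ l', c l' * (a * ∫ x, Y l x * Y l' x ∂μ) := by
        have hint (l' : ι) : Integrable (fun x => c l' * (Y l x * Y l' x)) μ :=
          ((hL2 l).integrable_mul (hL2 l')).const_mul _
        rw [integral_finsetSum _ fun l' _ => hint l', Finset.mul_sum]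
        exact Finset.sum_congr rfl fun l' _ => by rw [integral_const_mul]; ring
    _ = c l := by simp [horth]

theorem IsSphericalHarmonic.aestronglyMeasurable {n j : ℕ}
    {Y : EuclideanSpace ℝ (Fin (n + 1)) → ℝ} (hY : IsSphericalHarmonic n j Y)
    (μ : Measure (EuclideanSpace ℝ (Fin (n + 1)))) :
    AEStronglyMeasurable Y (μ.restrict (Metric.sphere 0 1)) := by
  obtain ⟨P, -, -, hP⟩ := hY
  exact ((continuous_eval P).comp (PiLp.continuous_ofLp 2 _)).aestronglyMeasurable.congr
    (ae_restrict_of_forall_mem Metric.isClosed_sphere.measurableSet fun x hx => (hP x hx).symm)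

theorem sigmaS_pos (m : ℕ) : 0 < sigmaS m := by
  unfold sigmaS
  positivity

theorem kappaSq_pos {n k : ℕ} (hn : 2 ≤ n) (hkn : k < n) (j : ℕ) : 0 < kappaSq n k j := by
  have hn' : (2 : ℝ) ≤ n := by exact_mod_cast hn
  have hkn' : (k : ℝ) + 1 ≤ n := by exact_mod_cast hkn
  have hj : (0 : ℝ) ≤ j := j.cast_nonneg
  have hk : (0 : ℝ) ≤ k := k.cast_nonneg
  have h1 : (0 : ℝ) < 2 * j + n - 1 := by linarith
  have h2 : 0 < Gamma (((j : ℝ) + n - 1) / 2) := Gamma_pos_of_pos (by linarith)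
  have h3 : 0 < Gamma (((j : ℝ) + n - k) / 2) := Gamma_pos_of_pos (by linarith)
  have := sigmaS_pos n
  have := sigmaS_pos (n - k - 1)
  have := sigmaS_pos k
  unfold kappaSq
  positivity

theorem dN_pos {n : ℕ} (hn : 2 ≤ n) (j : ℕ) : 0 < dN n j := by
  refine Nat.div_pos ?_ (Nat.mul_pos j.factorial_pos (n - 1).factorial_pos)
  have h : j.factorial * (n - 2).factorial ≤ (n + j - 2).factorial := by
    rw [show n + j - 2 = j + (n - 2) by omega]
    exact Nat.le_of_dvd (Nat.factorial_pos _) (Nat.factorial_mul_factorial_dvd_factorial_add _ _)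
  calc j.factorial * (n - 1).factorial
      = (n - 1) * (j.factorial * (n - 2).factorial) := by
        rw [show n - 1 = n - 2 + 1 by omega, Nat.factorial_succ]; ring
    _ ≤ (n + 2 * j - 1) * (n + j - 2).factorial := Nat.mul_le_mul (by omega) h

theorem alphaJ_pos {n k : ℕ} (hn : 2 ≤ n) (hkn : k < n) (j : ℕ) : 0 < alphaJ n k j :=
  mul_pos (Real.sqrt_pos.2 (kappaSq_pos hn hkn j))
    (Real.sqrt_pos.2 (by exact_mod_cast dN_pos hn j))

theorem addition_formula_general (n k j : ℕ) (hn : 2 ≤ n) (hkn : k ≤ n - 1)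
    (hj : Even j)
    (Y : Fin (dN n j) → EuclideanSpace ℝ (Fin (n + 1)) → ℝ)
    (hharm : ∀ lam, IsSphericalHarmonic n j (Y lam))
    (horth : ∀ lam lam' : Fin (dN n j),
      (sigmaS n)⁻¹ *
        ∫ x in Metric.sphere (0 : EuclideanSpace ℝ (Fin (n + 1))) 1,
          Y lam x * Y lam' x ∂μH[(n : ℝ)] = if lam = lam' then 1 else 0)
    (hbasis : ∀ Z : EuclideanSpace ℝ (Fin (n + 1)) → ℝ, IsSphericalHarmonic n j Z →
      ∃ c : Fin (dN n j) → ℝ,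
        ∀ x ∈ Metric.sphere (0 : EuclideanSpace ℝ (Fin (n + 1))) 1,
          Z x = ∑ lam, c lam * Y lam x)
    (x : EuclideanSpace ℝ (Fin (n + 1)))
    (hx : x ∈ Metric.sphere (0 : EuclideanSpace ℝ (Fin (n + 1))) 1)
    (v : Matrix (Fin (n + 1)) (Fin (n - k)) ℝ) (hv : vᵀ * v = 1) :
    jacobiR (((k : ℝ) - 1) / 2) (((n : ℝ) - (k : ℝ)) / 2 - 1) (j / 2)
        (2 * stiefelProj n k x v ^ 2 - 1)
      = (alphaJ n k j)⁻¹ *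
          ∑ lam, Y lam x *
            (alphaJ n k j * ((sigmaS n)⁻¹ *
              ∫ z in Metric.sphere (0 : EuclideanSpace ℝ (Fin (n + 1))) 1,
                Y lam z *
                  jacobiR (((k : ℝ) - 1) / 2) (((n : ℝ) - (k : ℝ)) / 2 - 1) (j / 2)
                    (2 * stiefelProj n k z v ^ 2 - 1) ∂μH[(n : ℝ)])) := by
  have hkn' : k < n := by omega
  obtain ⟨c, hc⟩ := hbasis _ (isSphericalHarmonic_jacobiR_stiefelProj hkn' hj hv)
  have hcoef (l : Fin (dN n j)) := integral_mul_eq_coeff_of_orthonormal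
    (fun l => (hharm l).aestronglyMeasurable μH[(n : ℝ)]) horth
    (ae_restrict_of_forall_mem Metric.isClosed_sphere.measurableSet hc) l
  simp only [hcoef, mul_left_comm _ (alphaJ n k j), ← Finset.mul_sum]
  rw [mul_inv_cancel_left₀ (alphaJ_pos hn hkn' j).ne', hc x hx]
  exact Finset.sum_congr rfl fun l _ => mul_comm _ _

/-- the addition formula
`R_{j/2}^{(ρ,σ)}(2|x^Tv|²-1) = α_j⁻¹ ∑_λ Y_{j,λ}(x) Ŷ_{j,λ}(v)`, where the induced
Stiefel harmonics are `Ŷ_{j,λ}(v) = α_j ∫_{S^n} Y_{j,λ}(x) R_{j/2}^{(ρ,σ)}(2|x^Tv|²-1) d_*x`. -/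
theorem addition_formula (n k j : ℕ) (hn : 2 ≤ n) (hk : 1 ≤ k) (hkn : k ≤ n - 1)
    (hj : Even j)
    (Y : Fin (dN n j) → EuclideanSpace ℝ (Fin (n + 1)) → ℝ)
    (hharm : ∀ lam, IsSphericalHarmonic n j (Y lam))
    (horth : ∀ lam lam' : Fin (dN n j),
      (sigmaS n)⁻¹ *
        ∫ x in Metric.sphere (0 : EuclideanSpace ℝ (Fin (n + 1))) 1,
          Y lam x * Y lam' x ∂μH[(n : ℝ)] = if lam = lam' then 1 else 0)
    (hbasis : ∀ Z : EuclideanSpace ℝ (Fin (n + 1)) → ℝ, IsSphericalHarmonic n j Z →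
      ∃ c : Fin (dN n j) → ℝ,
        ∀ x ∈ Metric.sphere (0 : EuclideanSpace ℝ (Fin (n + 1))) 1,
          Z x = ∑ lam, c lam * Y lam x)
    (x : EuclideanSpace ℝ (Fin (n + 1)))
    (hx : x ∈ Metric.sphere (0 : EuclideanSpace ℝ (Fin (n + 1))) 1)
    (v : Matrix (Fin (n + 1)) (Fin (n - k)) ℝ) (hv : vᵀ * v = 1) :
    jacobiR (((k : ℝ) - 1) / 2) (((n : ℝ) - (k : ℝ)) / 2 - 1) (j / 2)
        (2 * stiefelProj n k x v ^ 2 - 1)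
      = (alphaJ n k j)⁻¹ *
          ∑ lam, Y lam x *
            (alphaJ n k j * ((sigmaS n)⁻¹ *
              ∫ z in Metric.sphere (0 : EuclideanSpace ℝ (Fin (n + 1))) 1,
                Y lam z *
                  jacobiR (((k : ℝ) - 1) / 2) (((n : ℝ) - (k : ℝ)) / 2 - 1) (j / 2)
                    (2 * stiefelProj n k z v ^ 2 - 1) ∂μH[(n : ℝ)])) :=
  addition_formula_general n k j hn hkn hj Y hharm horth hbasis x hx v hv
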